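/- Let R be a commutative Krasner hyperring with unit. If the quotient hyperring R/nil(R) has a nontrivial idempotent, then R has a nontrivial idempotent. -/
import Mathlib


universe u

/-- A commutative Krasner hyperring with unit: `(R,+)` is a canonical hypergroup
(multivalued addition), `(R,·)` is a commutative monoid, `·` distributes over `+`
and `0` is absorbing. -/
structure KHR (R : Type u) where
  hadd : R → R → Set R
  mul : R → R → R
  zero : R
  one : R
  neg : R → R
  hadd_comm : ∀ a b, hadd a b = hadd b a
  hadd_assoc : ∀ a b c, (⋃ x ∈ hadd a b, hadd x c) = ⋃ y ∈ hadd b c, hadd a y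
  zero_hadd : ∀ a, hadd zero a = {a}
  neg_mem : ∀ a, zero ∈ hadd a (neg a)
  neg_unique : ∀ a b, zero ∈ hadd a b → b = neg a
  reversible : ∀ a b c, c ∈ hadd a b → b ∈ hadd (neg a) c
  mul_assoc : ∀ a b c, mul (mul a b) c = mul a (mul b c)
  mul_comm : ∀ a b, mul a b = mul b a
  one_mul : ∀ a, mul one a = a
  zero_mul : ∀ a, mul zero a = zero
  distrib : ∀ a b c, (fun x => mul a x) '' hadd b c = hadd (mul a b) (mul a c)

namespace KHR

variable {R : Type u} {S : Type u} {T : Type u} {Q : Type u}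

/-- Sum of two subsets: `A + B = ⋃ {a + b : a ∈ A, b ∈ B}`. -/
def sumSet (H : KHR R) (A B : Set R) : Set R := ⋃ a ∈ A, ⋃ b ∈ B, H.hadd a b

/-- The coset `x + I`. -/
def coset (H : KHR R) (x : R) (I : Set R) : Set R := H.sumSet {x} I

/-- Hyperideal of a Krasner hyperring. -/
def IsHyperideal (H : KHR R) (I : Set R) : Prop :=
  H.zero ∈ I ∧ (∀ a ∈ I, ∀ b ∈ I, H.hadd a b ⊆ I) ∧ (∀ a ∈ I, H.neg a ∈ I) ∧
    ∀ r : R, ∀ a ∈ I, H.mul r a ∈ I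

/-- Prime hyperideal. -/
def IsPrime (H : KHR R) (P : Set R) : Prop :=
  H.IsHyperideal P ∧ P ≠ Set.univ ∧ ∀ a b : R, H.mul a b ∈ P → a ∈ P ∨ b ∈ P

/-- Maximal hyperideal. -/
def IsMaximal (H : KHR R) (M : Set R) : Prop :=
  H.IsHyperideal M ∧ M ≠ Set.univ ∧ ∀ J : Set R, H.IsHyperideal J → M ⊂ J → J = Set.univ

/-- The prime spectrum. -/
def Spectrum (H : KHR R) : Type u := {P : Set R // H.IsPrime P}

/-- The Zariski-closed set attached to a set of elements. -/
def V (H : KHR R) (s : Set R) : Set H.Spectrum := {P | s ⊆ P.1}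

/-- The basic Zariski-open set attached to an element. -/
def W (H : KHR R) (x : R) : Set H.Spectrum := {P | x ∉ P.1}

/-- The hyperideal generated by a set. -/
def genIdeal (H : KHR R) (s : Set R) : Set R := ⋂₀ {I | H.IsHyperideal I ∧ s ⊆ I}

/-- The product `IJ` of two hyperideals. -/
def mulIdeal (H : KHR R) (I J : Set R) : Set R :=
  H.genIdeal {x | ∃ a ∈ I, ∃ b ∈ J, x = H.mul a b}

/-- The Zariski topology on the prime spectrum. -/
def zariski (H : KHR R) : TopologicalSpace H.Spectrum :=
  TopologicalSpace.generateFrom {U | ∃ I : Set R, H.IsHyperideal I ∧ U = (H.V I)ᶜ}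

/-- Powers of an element. -/
def pow (H : KHR R) (x : R) : ℕ → R
  | 0 => H.one
  | n+1 => H.mul x (H.pow x n)

/-- The nilradical. -/
def nil (H : KHR R) : Set R := {x | ∃ n : ℕ, H.pow x (n+1) = H.zero}

/-- The radical of a hyperideal. -/
def radical (H : KHR R) (I : Set R) : Set R := {x | ∃ n : ℕ, H.pow x (n+1) ∈ I}

/-- Units. -/
def IsUnit (H : KHR R) (x : R) : Prop := ∃ y, H.mul x y = H.one

/-- Good homomorphism of Krasner hyperrings. -/
structure GoodHom (H : KHR R) (K : KHR S) where
  toFun : R → S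
  map_hadd : ∀ a b, toFun '' H.hadd a b = K.hadd (toFun a) (toFun b)
  map_mul : ∀ a b, toFun (H.mul a b) = K.mul (toFun a) (toFun b)
  map_zero : toFun H.zero = K.zero
  map_one : toFun H.one = K.one

theorem comap_prime (H : KHR R) (K : KHR S) (f : GoodHom H K) {P : Set S}
    (hP : K.IsPrime P) : H.IsPrime (f.toFun ⁻¹' P) := by
  obtain ⟨⟨h0, haddc, hneg, hmulc⟩, hne, hpr⟩ := hP
  refine ⟨⟨?_, ?_, ?_, ?_⟩, ?_, ?_⟩
  · show f.toFun H.zero ∈ P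
    rw [f.map_zero]; exact h0
  · intro a ha b hb c hc
    have : f.toFun c ∈ K.hadd (f.toFun a) (f.toFun b) := by
      rw [← f.map_hadd]; exact ⟨c, hc, rfl⟩
    exact haddc _ ha _ hb this
  · intro a ha
    have hz : K.zero ∈ K.hadd (f.toFun a) (f.toFun (H.neg a)) := by
      rw [← f.map_hadd, ← f.map_zero]
      exact ⟨H.zero, H.neg_mem a, rfl⟩
    have : f.toFun (H.neg a) = K.neg (f.toFun a) := K.neg_unique _ _ hz
    show f.toFun (H.neg a) ∈ P
    rw [this]; exact hneg _ ha
  · intro r a ha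
    show f.toFun (H.mul r a) ∈ P
    rw [f.map_mul]; exact hmulc _ _ ha
  · intro hU
    apply hne
    ext s
    simp only [Set.mem_univ, iff_true]
    have h1 : f.toFun H.one ∈ P := by
      have : H.one ∈ f.toFun ⁻¹' P := by rw [hU]; trivial
      exact this
    have : K.mul s (f.toFun H.one) ∈ P := hmulc s _ h1
    rwa [f.map_one, K.mul_comm, K.one_mul] at this
  · intro a b hab
    have : K.mul (f.toFun a) (f.toFun b) ∈ P := by rw [← f.map_mul]; exact hab
    exact hpr _ _ this

/-- The induced map on spectra. -/
def specMap (H : KHR R) (K : KHR S) (f : GoodHom H K) : K.Spectrum → H.Spectrum :=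
  fun P => ⟨f.toFun ⁻¹' P.1, comap_prime H K f P.2⟩

/-- `K` is the quotient hyperring of `H` by the hyperideal `I`, witnessed by the
canonical projection. -/
structure IsQuotient (H : KHR R) (K : KHR Q) (I : Set R) where
  hom : GoodHom H K
  surj : Function.Surjective hom.toFun
  fiber : ∀ x y, hom.toFun x = hom.toFun y ↔ H.coset x I = H.coset y I

/-- Strongly regular (equivalence) relation on a Krasner hyperring. -/
def StronglyRegular (H : KHR R) (ρ : R → R → Prop) : Prop :=
  Equivalence ρ ∧ ∀ a b c d, ρ a b → ρ c d →
    (∀ x ∈ H.hadd a c, ∀ y ∈ H.hadd b d, ρ x y) ∧ ρ (H.mul a c) (H.mul b d)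

/-- The fundamental relation `γ*`: the smallest strongly regular relation. -/
def gamma (H : KHR R) : R → R → Prop := fun x y => ∀ ρ, H.StronglyRegular ρ → ρ x y

/-- The zero class `γ*(0)` of the fundamental relation. -/
def gammaZero (H : KHR R) : Set R := {x | H.gamma x H.zero}



/-- The product of two Krasner hyperrings, with componentwise hyperoperations. -/
def prodKHR (H : KHR R) (K : KHR S) : KHR (R × S) where
  hadd a b := H.hadd a.1 b.1 ×ˢ K.hadd a.2 b.2
  mul a b := (H.mul a.1 b.1, K.mul a.2 b.2)
  zero := (H.zero, K.zero)
  one := (H.one, K.one)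
  neg a := (H.neg a.1, K.neg a.2)
  hadd_comm a b := by beta_reduce; rw [H.hadd_comm, K.hadd_comm]
  hadd_assoc a b c := by
    beta_reduce
    have h1 := H.hadd_assoc a.1 b.1 c.1
    have h2 := K.hadd_assoc a.2 b.2 c.2
    ext ⟨p, q⟩
    have e1 : p ∈ (⋃ x ∈ H.hadd a.1 b.1, H.hadd x c.1) ↔
        p ∈ ⋃ y ∈ H.hadd b.1 c.1, H.hadd a.1 y := by rw [h1]
    have e2 : q ∈ (⋃ x ∈ K.hadd a.2 b.2, K.hadd x c.2) ↔
        q ∈ ⋃ y ∈ K.hadd b.2 c.2, K.hadd a.2 y := by rw [h2]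
    simp only [Set.mem_iUnion, Set.mem_prod] at e1 e2 ⊢
    constructor
    · rintro ⟨⟨x1, x2⟩, ⟨⟨hx1, hx2⟩, hp, hq⟩⟩
      obtain ⟨y1, hy1, hp'⟩ := e1.1 ⟨x1, hx1, hp⟩
      obtain ⟨y2, hy2, hq'⟩ := e2.1 ⟨x2, hx2, hq⟩
      exact ⟨(y1, y2), ⟨hy1, hy2⟩, hp', hq'⟩
    · rintro ⟨⟨y1, y2⟩, ⟨⟨hy1, hy2⟩, hp, hq⟩⟩
      obtain ⟨x1, hx1, hp'⟩ := e1.2 ⟨y1, hy1, hp⟩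
      obtain ⟨x2, hx2, hq'⟩ := e2.2 ⟨y2, hy2, hq⟩
      exact ⟨(x1, x2), ⟨hx1, hx2⟩, hp', hq'⟩
  zero_hadd a := by
    beta_reduce
    rw [H.zero_hadd, K.zero_hadd, Set.singleton_prod_singleton]
  neg_mem a := ⟨H.neg_mem a.1, K.neg_mem a.2⟩
  neg_unique a b h := Prod.ext (H.neg_unique _ _ h.1) (K.neg_unique _ _ h.2)
  reversible a b c h := ⟨H.reversible _ _ _ h.1, K.reversible _ _ _ h.2⟩
  mul_assoc a b c := Prod.ext (H.mul_assoc _ _ _) (K.mul_assoc _ _ _)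
  mul_comm a b := Prod.ext (H.mul_comm _ _) (K.mul_comm _ _)
  one_mul a := Prod.ext (H.one_mul _) (K.one_mul _)
  zero_mul a := Prod.ext (H.zero_mul _) (K.zero_mul _)
  distrib a b c := by
    ext ⟨p, q⟩
    simp only [Set.mem_image, Set.mem_prod]
    constructor
    · rintro ⟨⟨x, y⟩, ⟨hx, hy⟩, h⟩
      obtain ⟨h1, h2⟩ := Prod.mk.injEq .. ▸ h
      constructor
      · rw [← H.distrib]; exact ⟨x, hx, h1⟩
      · rw [← K.distrib]; exact ⟨y, hy, h2⟩
    · rintro ⟨hp, hq⟩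
      rw [← H.distrib] at hp
      rw [← K.distrib] at hq
      obtain ⟨x, hx, hx'⟩ := hp
      obtain ⟨y, hy, hy'⟩ := hq
      exact ⟨(x, y), ⟨hx, hy⟩, by simp [hx', hy']⟩


end KHR

namespace KHR

variable {R : Type u} {S : Type u}

section Basic
variable (H : KHR R)

lemma neg_zero' : H.neg H.zero = H.zero :=
  (H.neg_unique H.zero H.zero (by rw [H.zero_hadd]; rfl)).symm

lemma neg_neg' (a : R) : H.neg (H.neg a) = a :=
  (H.neg_unique (H.neg a) a (by rw [H.hadd_comm]; exact H.neg_mem a)).symm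

lemma mul_one' (a : R) : H.mul a H.one = a := by rw [H.mul_comm]; exact H.one_mul a

lemma mul_zero' (a : R) : H.mul a H.zero = H.zero := by
  rw [H.mul_comm]; exact H.zero_mul a

lemma mul_neg' (a b : R) : H.mul a (H.neg b) = H.neg (H.mul a b) := by
  apply H.neg_unique
  have h : H.mul a H.zero ∈ (fun x => H.mul a x) '' H.hadd b (H.neg b) :=
    ⟨H.zero, H.neg_mem b, rfl⟩
  rw [H.distrib, H.mul_zero'] at h
  exact h

lemma neg_mem_hadd {a b c : R} (h : c ∈ H.hadd a b) :
    H.neg c ∈ H.hadd (H.neg a) (H.neg b) := by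
  have h1 : a ∈ H.hadd (H.neg b) c := H.reversible b a c (by rwa [H.hadd_comm] at h)
  have h2 : H.neg b ∈ H.hadd (H.neg c) a :=
    H.reversible c (H.neg b) a (by rwa [H.hadd_comm] at h1)
  exact H.reversible a (H.neg c) (H.neg b) (by rwa [H.hadd_comm] at h2)

lemma assocE {a b c z r : R} (hr : r ∈ H.hadd z c) (hz : z ∈ H.hadd a b) :
    ∃ y ∈ H.hadd b c, r ∈ H.hadd a y := by
  have h : r ∈ ⋃ x ∈ H.hadd a b, H.hadd x c := Set.mem_biUnion hz hr
  rw [H.hadd_assoc] at h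
  simpa using h

lemma assocE' {a b c y r : R} (hr : r ∈ H.hadd a y) (hy : y ∈ H.hadd b c) :
    ∃ z ∈ H.hadd a b, r ∈ H.hadd z c := by
  have h : r ∈ ⋃ y' ∈ H.hadd b c, H.hadd a y' := Set.mem_biUnion hy hr
  rw [← H.hadd_assoc] at h
  simpa using h

lemma pow_zero'' (a : R) : H.pow a 0 = H.one := rfl

lemma pow_succ'' (a : R) (n : ℕ) : H.pow a (n + 1) = H.mul a (H.pow a n) := rfl

lemma pow_add' (a : R) (i j : ℕ) :
    H.pow a (i + j) = H.mul (H.pow a i) (H.pow a j) := by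
  induction i with
  | zero => simp only [Nat.zero_add, pow_zero'', H.one_mul]
  | succ i ih =>
    have : i + 1 + j = (i + j) + 1 := by omega
    rw [this, pow_succ'', ih, pow_succ'', H.mul_assoc]

lemma mul_pow' (a b : R) (n : ℕ) :
    H.pow (H.mul a b) n = H.mul (H.pow a n) (H.pow b n) := by
  letI : Std.Associative H.mul := ⟨H.mul_assoc⟩
  letI : Std.Commutative H.mul := ⟨H.mul_comm⟩
  induction n with
  | zero => simp only [pow_zero'', H.one_mul]
  | succ n ih => rw [pow_succ'', ih, pow_succ'', pow_succ'']; ac_rfl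

lemma pow_neg' (a : R) (k : ℕ) :
    H.pow (H.neg a) k = H.pow a k ∨ H.pow (H.neg a) k = H.neg (H.pow a k) := by
  induction k with
  | zero => left; rfl
  | succ k ih =>
    rcases ih with h | h
    · right
      rw [pow_succ'', h, H.mul_comm (H.neg a), H.mul_neg', H.mul_comm (H.pow a k) a,
        pow_succ'']
    · left
      rw [pow_succ'', h, H.mul_neg', H.mul_comm (H.neg a), H.mul_neg', H.neg_neg',
        H.mul_comm (H.pow a k) a, pow_succ'']

lemma idem_pow {y : R} (hy : H.mul y y = y) (n : ℕ) : H.pow y (n + 1) = y := by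
  induction n with
  | zero => rw [pow_succ'', pow_zero'', H.mul_one']
  | succ n ih => rw [pow_succ'', ih, hy]

lemma zero_mem_nil : H.zero ∈ H.nil :=
  ⟨0, by rw [pow_succ'', pow_zero'', H.mul_one']⟩

lemma self_mem_coset {I : Set R} (h0 : H.zero ∈ I) (a : R) : a ∈ H.coset a I := by
  unfold coset sumSet
  refine Set.mem_biUnion rfl (Set.mem_biUnion h0 ?_)
  rw [H.hadd_comm, H.zero_hadd]; rfl

end Basic

lemma map_pow' {H : KHR R} {K : KHR S} (f : GoodHom H K) (a : R) (n : ℕ) :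
    f.toFun (H.pow a n) = K.pow (f.toFun a) n := by
  induction n with
  | zero => exact f.map_one
  | succ n ih => rw [pow_succ'', f.map_mul, ih, pow_succ'']

/-- Additive closure of a set of elements. -/
inductive AddCl (H : KHR R) (A : Set R) : R → Prop
  | base {a} : a ∈ A → AddCl H A a
  | step {p q r} : AddCl H A p → AddCl H A q → r ∈ H.hadd p q → AddCl H A r

lemma addCl_subset (H : KHR R) {A T : Set R} (hA : A ⊆ T)
    (hT : ∀ p ∈ T, ∀ q ∈ T, H.hadd p q ⊆ T) : ∀ r, AddCl H A r → r ∈ T := by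
  intro r h
  induction h with
  | base h => exact hA h
  | step hp hq hr ihp ihq => exact hT _ ihp _ ihq hr

lemma addCl_mono (H : KHR R) {A B : Set R} (h : ∀ a ∈ A, AddCl H B a) {r : R}
    (hr : AddCl H A r) : AddCl H B r := by
  induction hr with
  | base ha => exact h _ ha
  | step hp hq hpq ihp ihq => exact AddCl.step ihp ihq hpq

lemma one_mem_level (H : KHR R) (x w : R) (hxw : H.one ∈ H.hadd x w) (k : ℕ) :
    AddCl H {r | ∃ u i j, i + j = k ∧ r = H.mul u (H.mul (H.pow x i) (H.pow w j))}
      H.one := by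
  letI : Std.Associative H.mul := ⟨H.mul_assoc⟩
  letI : Std.Commutative H.mul := ⟨H.mul_comm⟩
  induction k with
  | zero =>
    exact .base ⟨H.one, 0, 0, rfl, by
      rw [pow_zero'', pow_zero'', H.one_mul, H.mul_one']⟩
  | succ k ih =>
    refine H.addCl_mono ?_ ih
    rintro a ⟨u, i, j, hij, rfl⟩
    set c := H.mul u (H.mul (H.pow x i) (H.pow w j)) with hc
    have hmem : c ∈ H.hadd (H.mul c x) (H.mul c w) := by
      have h1 : H.mul c H.one ∈ (fun z => H.mul c z) '' H.hadd x w := ⟨H.one, hxw, rfl⟩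
      rw [H.distrib] at h1
      rwa [H.mul_one'] at h1
    refine AddCl.step (.base ⟨u, i + 1, j, by omega, ?_⟩) (.base ⟨u, i, j + 1, by omega, ?_⟩) hmem
    · rw [hc, pow_succ'']; ac_rfl
    · rw [hc, pow_succ'']; ac_rfl

theorem one_mem_comax (H : KHR R) (x w : R) (hxw : H.one ∈ H.hadd x w) (N : ℕ) :
    ∃ s t u v, s = H.mul u (H.pow x N) ∧ t = H.mul v (H.pow w N) ∧
      H.one ∈ H.hadd s t := by
  letI : Std.Associative H.mul := ⟨H.mul_assoc⟩
  letI : Std.Commutative H.mul := ⟨H.mul_comm⟩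
  set I : Set R := {r | ∃ u, r = H.mul u (H.pow x N)} with hI
  set J : Set R := {r | ∃ v, r = H.mul v (H.pow w N)} with hJ
  set T : Set R := {r | ∃ s ∈ I, ∃ t ∈ J, r ∈ H.hadd s t} with hT
  have h0I : H.zero ∈ I := ⟨H.zero, (H.zero_mul _).symm⟩
  have h0J : H.zero ∈ J := ⟨H.zero, (H.zero_mul _).symm⟩
  have hIc : ∀ a ∈ I, ∀ b ∈ I, H.hadd a b ⊆ I := by
    rintro a ⟨u1, rfl⟩ b ⟨u2, rfl⟩ c hc
    have : c ∈ (fun z => H.mul (H.pow x N) z) '' H.hadd u1 u2 := by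
      rw [H.distrib, H.mul_comm (H.pow x N) u1, H.mul_comm (H.pow x N) u2]
      exact hc
    obtain ⟨u', _, rfl⟩ := this
    exact ⟨u', H.mul_comm _ _⟩
  have hJc : ∀ a ∈ J, ∀ b ∈ J, H.hadd a b ⊆ J := by
    rintro a ⟨u1, rfl⟩ b ⟨u2, rfl⟩ c hc
    have : c ∈ (fun z => H.mul (H.pow w N) z) '' H.hadd u1 u2 := by
      rw [H.distrib, H.mul_comm (H.pow w N) u1, H.mul_comm (H.pow w N) u2]
      exact hc
    obtain ⟨u', _, rfl⟩ := this
    exact ⟨u', H.mul_comm _ _⟩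
  have hbase : {r | ∃ u i j, i + j = 2 * N ∧
      r = H.mul u (H.mul (H.pow x i) (H.pow w j))} ⊆ T := by
    rintro r ⟨u, i, j, hij, rfl⟩
    by_cases hiN : N ≤ i
    · obtain ⟨i', rfl⟩ : ∃ i', i = i' + N := ⟨i - N, by omega⟩
      have heq : H.mul u (H.mul (H.pow x (i' + N)) (H.pow w j)) =
          H.mul (H.mul u (H.mul (H.pow x i') (H.pow w j))) (H.pow x N) := by
        rw [H.pow_add']; ac_rfl
      refine ⟨H.mul (H.mul u (H.mul (H.pow x i') (H.pow w j))) (H.pow x N),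
        ⟨H.mul u (H.mul (H.pow x i') (H.pow w j)), rfl⟩, H.zero, h0J, ?_⟩
      rw [H.hadd_comm, H.zero_hadd]
      exact Set.mem_singleton_iff.mpr heq
    · obtain ⟨j', rfl⟩ : ∃ j', j = j' + N := ⟨j - N, by omega⟩
      have heq : H.mul u (H.mul (H.pow x i) (H.pow w (j' + N))) =
          H.mul (H.mul u (H.mul (H.pow x i) (H.pow w j'))) (H.pow w N) := by
        rw [H.pow_add']; ac_rfl
      refine ⟨H.zero, h0I, H.mul (H.mul u (H.mul (H.pow x i) (H.pow w j'))) (H.pow w N),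
        ⟨H.mul u (H.mul (H.pow x i) (H.pow w j')), rfl⟩, ?_⟩
      rw [H.zero_hadd]
      exact Set.mem_singleton_iff.mpr heq
  have hclosed : ∀ p ∈ T, ∀ q ∈ T, H.hadd p q ⊆ T := by
    rintro p ⟨s1, hs1, t1, ht1, hp⟩ q ⟨s2, hs2, t2, ht2, hq⟩ r hr
    obtain ⟨α, hα, hr1⟩ := H.assocE hr hp
    obtain ⟨β, hβ, hα1⟩ := H.assocE' hα hq
    obtain ⟨γ, hγ, hr2⟩ := H.assocE' hr1 hα1
    have hβ' : β ∈ H.hadd s2 t1 := by rwa [H.hadd_comm] at hβ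
    obtain ⟨ε, hε, hγ1⟩ := H.assocE' hγ hβ'
    obtain ⟨τ, hτ, hr3⟩ := H.assocE hr2 hγ1
    exact ⟨ε, hIc _ hs1 _ hs2 hε, τ, hJc _ ht1 _ ht2 hτ, hr3⟩
  have h1 := H.addCl_subset hbase hclosed H.one (H.one_mem_level x w hxw (2 * N))
  obtain ⟨s, ⟨u, rfl⟩, t, ⟨v, rfl⟩, hst⟩ := h1
  exact ⟨_, _, u, v, rfl, rfl, hst⟩

end KHR

/-- If the quotient hyperring `R/nil(R)` has a nontrivial idempotent,
then `R` has a nontrivial idempotent. -/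

theorem stmt10 {R Q : Type u} (H : KHR R) (K : KHR Q)
    (q : KHR.IsQuotient H K H.nil)
    (h : ∃ y : Q, K.mul y y = y ∧ y ≠ K.zero ∧ y ≠ K.one) :
    ∃ x : R, H.mul x x = x ∧ x ≠ H.zero ∧ x ≠ H.one := by
  letI : Std.Associative H.mul := ⟨H.mul_assoc⟩
  letI : Std.Commutative H.mul := ⟨H.mul_comm⟩
  letI : Std.Associative K.mul := ⟨K.mul_assoc⟩
  letI : Std.Commutative K.mul := ⟨K.mul_comm⟩
  obtain ⟨y, hyidem, hy0, hy1⟩ := h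
  obtain ⟨x, hx⟩ := q.surj y
  set f := q.hom with hf
  have hcos := (q.fiber (H.mul x x) x).mp (by rw [f.map_mul, hx]; exact hyidem)
  have hmem : H.mul x x ∈ H.coset x H.nil := by
    rw [← hcos]; exact H.self_mem_coset H.zero_mem_nil _
  have hmem' : H.mul x x ∈ ⋃ a ∈ ({x} : Set R), ⋃ b ∈ H.nil, H.hadd a b := hmem
  obtain ⟨n, hn_nil, hxx⟩ : ∃ n ∈ H.nil, H.mul x x ∈ H.hadd x n := by
    simpa only [Set.mem_iUnion, Set.mem_singleton_iff, exists_prop, exists_eq_left]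
      using hmem'
  obtain ⟨m, hm⟩ := hn_nil
  set N := m + 1 with hN
  have hd1 : H.neg n ∈ H.hadd x (H.neg (H.mul x x)) := by
    have h1 : n ∈ H.hadd (H.neg x) (H.mul x x) := H.reversible x n _ hxx
    have h2 := H.neg_mem_hadd h1
    rwa [H.neg_neg'] at h2
  have hdnil : H.pow (H.neg n) N = H.zero := by
    rcases H.pow_neg' n N with hcase | hcase
    · rw [hcase]; exact hm
    · rw [hcase, hm, H.neg_zero']
  have himg : H.neg n ∈ (fun z => H.mul x z) '' H.hadd H.one (H.neg x) := by
    rw [H.distrib, H.mul_one', H.mul_neg']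
    exact hd1
  obtain ⟨w, hw, hdw⟩ := himg
  have hxw1 : H.one ∈ H.hadd x w := by
    have h3 := H.reversible (H.neg x) H.one w (by rwa [H.hadd_comm] at hw)
    rwa [H.neg_neg'] at h3
  have hdN : H.pow (H.mul x w) N = H.zero := by
    show H.pow ((fun z => H.mul x z) w) N = H.zero
    rw [hdw]; exact hdnil
  obtain ⟨s, t, u, v, hsu, htv, hst⟩ := H.one_mem_comax x w hxw1 N
  have hst0 : H.mul s t = H.zero := by
    rw [hsu, htv]
    have heq : H.mul (H.mul u (H.pow x N)) (H.mul v (H.pow w N))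
        = H.mul (H.mul u v) (H.pow (H.mul x w) N) := by rw [H.mul_pow']; ac_rfl
    rw [heq, hdN, H.mul_zero']
  have hsidem : H.mul s s = s := by
    have h1 : H.mul s H.one ∈ (fun z => H.mul s z) '' H.hadd s t := ⟨H.one, hst, rfl⟩
    rw [H.distrib, hst0, H.mul_one'] at h1
    rw [H.hadd_comm, H.zero_hadd] at h1
    exact (Set.eq_of_mem_singleton h1).symm
  refine ⟨s, hsidem, ?_, ?_⟩
  · intro hs0
    have ht1 : t = H.one := by
      rw [hs0, H.zero_hadd] at hst
      exact (Set.eq_of_mem_singleton hst).symm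
    have h1 : H.one = H.mul v (H.pow w N) := by rw [← htv, ht1]
    have hk : K.one = K.mul (f.toFun v) (K.pow (f.toFun w) N) := by
      have h2 := congrArg f.toFun h1
      rwa [f.map_one, f.map_mul, KHR.map_pow' f] at h2
    have he : K.pow (K.mul y (f.toFun w)) N = K.zero := by
      have h2 := congrArg f.toFun hdN
      rwa [f.map_zero, KHR.map_pow' f, f.map_mul, hx] at h2
    have hyeg : y = K.mul (K.mul y (f.toFun w))
        (K.mul (f.toFun v) (K.pow (f.toFun w) m)) := by
      conv_lhs => rw [← K.mul_one' y, hk]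
      rw [hN, K.pow_succ'']
      ac_rfl
    have hzero : K.pow y N = K.zero := by
      rw [hyeg, K.mul_pow', he, K.zero_mul]
    rw [hN, K.idem_pow hyidem m] at hzero
    exact hy0 hzero
  · intro hs1
    have h1 : H.one = H.mul u (H.pow x N) := by rw [← hsu, hs1]
    have hk : K.one = K.mul (f.toFun u) y := by
      have h2 := congrArg f.toFun h1
      rwa [f.map_one, f.map_mul, KHR.map_pow' f, hx, hN, K.idem_pow hyidem m] at h2
    apply hy1
    calc y = K.mul (K.mul (f.toFun u) y) y := by rw [← hk, K.one_mul]
    _ = K.mul (f.toFun u) (K.mul y y) := K.mul_assoc _ _ _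
    _ = K.mul (f.toFun u) y := by rw [hyidem]
    _ = K.one := hk.symm
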